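/- Suppose 0 < β ≤ β_c = log 4 and 0 < K < K_c^{(2)}(β) = (e^β + 2)/(4β). Then for every α ∈ (0, (K_c^{(2)}(β) − K)/K_c^{(2)}(β)) and every ε ∈ (0,1), for all sufficiently large n the mixing time of the Glauber dynamics of the mean-field Blume–Capel model on n vertices satisfies t_mix(ε) ≤ (n/α)(log n + log(1/ε)). -/

import Mathlib

open Filter

noncomputable section

/-- The three spin values `-1, 0, 1` of the Blume–Capel model. -/
def spinVal : Fin 3 → ℝ := ![(-1 : ℝ), 0, 1]

/-- Total spin `S_n(ω) = Σ_j ω_j`. -/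
def Sn (n : ℕ) (ω : Fin n → Fin 3) : ℝ := ∑ i, spinVal (ω i)

/-- Blume–Capel Hamiltonian `H_{n,K}(ω) = Σ_j ω_j² − (K/n)(Σ_j ω_j)²`. -/
def Hn (n : ℕ) (K : ℝ) (ω : Fin n → Fin 3) : ℝ :=
  (∑ i, (spinVal (ω i)) ^ 2) - (K / n) * (Sn n ω) ^ 2

/-- Partition function `Z_n(β,K)`. -/
def Zn (n : ℕ) (β K : ℝ) : ℝ := ∑ ω : Fin n → Fin 3, Real.exp (-β * Hn n K ω)

/-- The Gibbs measure `P_{n,β,K}(ω) = exp(−βH_{n,K}(ω))/Z_n(β,K)`. -/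
def gibbsBC (n : ℕ) (β K : ℝ) (ω : Fin n → Fin 3) : ℝ :=
  Real.exp (-β * Hn n K ω) / Zn n β K

/-- Glauber update weights for a vertex with complementary spin sum `S̃`:
the new spin is `−1, 0, +1` with weights `e^{−2βK S̃/n}, e^{β−βK/n}, e^{2βK S̃/n}`. -/
def bcWeight (β K : ℝ) (n : ℕ) (Stil : ℝ) : Fin 3 → ℝ :=
  ![Real.exp (-(2 * β * K * Stil / n)), Real.exp (β - β * K / n),
    Real.exp (2 * β * K * Stil / n)]

/-- Transition matrix of the Glauber dynamics of the mean-field Blume–Capel model: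
pick a vertex `i` uniformly and refresh its spin according to the conditional
Gibbs distribution. -/
def bcGlauber (β K : ℝ) (n : ℕ) :
    Matrix (Fin n → Fin 3) (Fin n → Fin 3) ℝ := fun σ τ =>
  (n : ℝ)⁻¹ * ∑ i : Fin n, ∑ k : Fin 3,
    if τ = Function.update σ i k then
      bcWeight β K n (Sn n σ - spinVal (σ i)) k /
        (∑ j : Fin 3, bcWeight β K n (Sn n σ - spinVal (σ i)) j)
    else 0

/-- Total variation distance `(1/2)Σ_x |μ(x) − ν(x)|` on `{−1,0,1}^n`. -/
def tvBC (n : ℕ) (μ ν : (Fin n → Fin 3) → ℝ) : ℝ := (1 / 2) * ∑ ω, |μ ω - ν ω|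

/-- Mixing time `t_mix(ε)` of the Glauber dynamics of the Blume–Capel model. -/
def tmixBC (β K : ℝ) (n : ℕ) (ε : ℝ) : ℕ :=
  sInf {t : ℕ | ∀ σ : Fin n → Fin 3,
    tvBC n (fun τ => ((bcGlauber β K n) ^ t) σ τ) (gibbsBC n β K) ≤ ε}

/-- Second-order critical curve `K_c^{(2)}(β) = (e^β + 2)/(4β)`. -/
def Kc2 (β : ℝ) : ℝ := (Real.exp β + 2) / (4 * β)

/-!
Path coupling for the metric `∑ i, |ω i - ω' i|`. Let two configurations differ only at site `j`.
With probability `1/n` the dynamics updates `j` and the two copies coalesce. Otherwise it updates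
some `i ≠ j`, whose local fields `2βK S̃/n` differ by `2βK/n · |ω j - ω' j|`; with `c = e^{β-βK/n}`,
the heat-bath probabilities of the spins `±1` move in total by at most `2/(2+c)` times that
difference, because the derivative of the magnetization `(eˣ - e⁻ˣ)/(e⁻ˣ + c + eˣ)` is at most
`2/(2+c)` as soon as `c ≤ 4`, i.e. `β ≤ log 4`. So observables that are Lipschitz site by site
contract under one step by `κ_n = (1 - 1/n)(1 + 4βK/((2+c)n))`, and `κ_n ≤ 1 - α'/n` for large `n`
whenever `α' < (K_c^{(2)}(β) - K)/K_c^{(2)}(β)`, since `4βK/(2+e^β) = K/K_c^{(2)}(β)`.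
Testing `P^t(σ,·) - π` against the indicator of `{P^t(σ,·) > π}` and using stationarity bounds the
total variation distance by the oscillation `2nκ_nᵗ` of `P^t` applied to that indicator.
-/

open Real Finset Function Topology
open scoped Matrix

def heatBathWeight (c x : ℝ) : Fin 3 → ℝ := ![exp (-x), c, exp x]

def heatBathProb (c x : ℝ) (k : Fin 3) : ℝ :=
  heatBathWeight c x k / ∑ j, heatBathWeight c x j

section HeatBath

variable {c : ℝ}

lemma sum_heatBathWeight (c x : ℝ) : ∑ j, heatBathWeight c x j = exp (-x) + c + exp x := by
  simp [heatBathWeight, Fin.sum_univ_three]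

lemma sum_heatBathWeight_pos (hc : 0 ≤ c) (x : ℝ) : 0 < ∑ j, heatBathWeight c x j := by
  rw [sum_heatBathWeight]; positivity

lemma heatBathProb_nonneg (hc : 0 ≤ c) (x : ℝ) (k : Fin 3) : 0 ≤ heatBathProb c x k := by
  refine div_nonneg ?_ (sum_heatBathWeight_pos hc x).le
  fin_cases k <;> simp [heatBathWeight, hc, exp_nonneg]

lemma sum_heatBathProb (hc : 0 ≤ c) (x : ℝ) : ∑ k, heatBathProb c x k = 1 := by
  simp only [heatBathProb, ← Finset.sum_div, div_self (sum_heatBathWeight_pos hc x).ne']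

lemma heatBathProb_two (c x : ℝ) : heatBathProb c x 2 = exp x / (exp (-x) + c + exp x) := by
  rw [heatBathProb, sum_heatBathWeight]; rfl

lemma heatBathProb_zero (c x : ℝ) : heatBathProb c x 0 = heatBathProb c (-x) 2 := by
  rw [heatBathProb_two, heatBathProb, sum_heatBathWeight, neg_neg]
  show exp (-x) / _ = _
  ring

lemma monotone_heatBathProb_two (hc : 0 ≤ c) : Monotone (heatBathProb c · 2) := by
  intro x y hxy
  simp only [heatBathProb_two]
  rw [div_le_div_iff₀ (by positivity) (by positivity)]
  have hexp : exp x ≤ exp y := exp_le_exp.2 hxy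
  have hcross : exp x * exp (-y) ≤ exp y * exp (-x) := by
    rw [← exp_add, ← exp_add]; exact exp_le_exp.2 (by linarith)
  nlinarith [mul_le_mul_of_nonneg_left hexp hc]

lemma antitone_heatBathProb_zero (hc : 0 ≤ c) : Antitone (heatBathProb c · 0) := by
  intro x y hxy
  simp only [heatBathProb_zero]
  exact monotone_heatBathProb_two hc (neg_le_neg hxy)

lemma hasDerivAt_magnetization (hc : 0 ≤ c) (x : ℝ) :
    HasDerivAt (fun x => (exp x - exp (-x)) / (exp (-x) + c + exp x))
      ((4 + c * (exp x + exp (-x))) / (exp (-x) + c + exp x) ^ 2) x := by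
  have hneg : HasDerivAt (fun x => exp (-x)) (-exp (-x)) x := by
    simpa [Function.comp_def] using (hasDerivAt_exp (-x)).comp x (hasDerivAt_neg x)
  have hD : exp (-x) + c + exp x ≠ 0 := (sum_heatBathWeight c x ▸ sum_heatBathWeight_pos hc x).ne'
  have hinv : exp x * exp (-x) = 1 := by rw [← exp_add, add_neg_cancel, exp_zero]
  refine (((hasDerivAt_exp x).fun_sub hneg).fun_div
    ((hneg.add_const c).fun_add (hasDerivAt_exp x)) hD).congr_deriv ?_
  congr 1
  linear_combination 4 * hinv

lemma four_add_mul_div_sq_le (hc : 0 ≤ c) (hc4 : c ≤ 4) {s : ℝ} (hs : 2 ≤ s) :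
    (4 + c * s) / (s + c) ^ 2 ≤ 2 / (2 + c) := by
  rw [div_le_div_iff₀ (by positivity) (by positivity)]
  nlinarith [mul_nonneg (sub_nonneg.2 hs) (by nlinarith : (0 : ℝ) ≤ 2 * s + 4 + 2 * c - c ^ 2)]

lemma heatBathProb_sub_le (hc : 0 ≤ c) (hc4 : c ≤ 4) {x y : ℝ} (hxy : x ≤ y) :
    (heatBathProb c y 2 - heatBathProb c x 2) + (heatBathProb c x 0 - heatBathProb c y 0)
      ≤ 2 / (2 + c) * (y - x) := by
  have hderiv : ∀ z, deriv (fun x => (exp x - exp (-x)) / (exp (-x) + c + exp x)) z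
      ≤ 2 / (2 + c) := by
    intro z
    rw [(hasDerivAt_magnetization hc z).deriv,
      show exp (-z) + c + exp z = (exp z + exp (-z)) + c by ring]
    refine four_add_mul_div_sq_le hc hc4 ?_
    linarith [cosh_eq z, one_le_cosh z]
  have h := image_sub_le_mul_sub_of_deriv_le
    (fun z => (hasDerivAt_magnetization hc z).differentiableAt) hderiv hxy
  simp only [heatBathProb_zero, heatBathProb_two, neg_neg] at h ⊢
  convert h using 1
  ring_nf

lemma abs_heatBathProb_sub_le (hc : 0 ≤ c) (hc4 : c ≤ 4) (x y : ℝ) :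
    |heatBathProb c y 0 - heatBathProb c x 0| + |heatBathProb c y 2 - heatBathProb c x 2|
      ≤ 2 / (2 + c) * |y - x| := by
  rcases le_total x y with hxy | hyx
  · rw [abs_of_nonpos (sub_nonpos.2 (antitone_heatBathProb_zero hc hxy)),
      abs_of_nonneg (sub_nonneg.2 (monotone_heatBathProb_two hc hxy)),
      abs_of_nonneg (sub_nonneg.2 hxy)]
    linarith [heatBathProb_sub_le hc hc4 hxy]
  · rw [abs_of_nonneg (sub_nonneg.2 (antitone_heatBathProb_zero hc hyx)),
      abs_of_nonpos (sub_nonpos.2 (monotone_heatBathProb_two hc hyx)),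
      abs_of_nonpos (sub_nonpos.2 hyx)]
    linarith [heatBathProb_sub_le hc hc4 hyx]

end HeatBath

lemma abs_sum_mul_le_of_sum_eq_one {ι : Type*} [Fintype ι] {p a : ι → ℝ} {M : ℝ}
    (hp : ∀ k, 0 ≤ p k) (hp1 : ∑ k, p k = 1) (ha : ∀ k, |a k| ≤ M) :
    |∑ k, p k * a k| ≤ M :=
  calc |∑ k, p k * a k| ≤ ∑ k, p k * M :=
        (abs_sum_le_sum_abs _ _).trans <| sum_le_sum fun k _ => by
          rw [abs_mul, abs_of_nonneg (hp k)]; exact mul_le_mul_of_nonneg_left (ha k) (hp k)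
    _ = M := by rw [← sum_mul, hp1, one_mul]

lemma abs_sum_sub_mul_le {p q a : Fin 3 → ℝ} {L : ℝ} (hp : ∑ k, p k = 1) (hq : ∑ k, q k = 1)
    (ha0 : |a 0 - a 1| ≤ L) (ha2 : |a 2 - a 1| ≤ L) :
    |∑ k, (q k - p k) * a k| ≤ (|q 0 - p 0| + |q 2 - p 2|) * L := by
  rw [Fin.sum_univ_three] at hp hq ⊢
  calc |(q 0 - p 0) * a 0 + (q 1 - p 1) * a 1 + (q 2 - p 2) * a 2|
      = |(q 0 - p 0) * (a 0 - a 1) + (q 2 - p 2) * (a 2 - a 1)| := by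
        congr 1; linear_combination a 1 * (hq - hp)
    _ ≤ |q 0 - p 0| * |a 0 - a 1| + |q 2 - p 2| * |a 2 - a 1| :=
        (abs_add_le _ _).trans_eq (by rw [abs_mul, abs_mul])
    _ ≤ (|q 0 - p 0| + |q 2 - p 2|) * L := by
        rw [add_mul]; gcongr

lemma half_sum_abs_sub_le_of_oscillation {X : Type*} [Fintype X] {M : Matrix X X ℝ}
    (hM : ∀ x, ∑ y, M x y = 1) {μ : X → ℝ} (hμ0 : ∀ x, 0 ≤ μ x) (hμ1 : ∑ x, μ x = 1)
    (hμM : μ ᵥ* M = μ) {C : ℝ}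
    (hC : ∀ f : X → ℝ, (∀ x, f x ∈ Set.Icc 0 1) → ∀ x y, (M *ᵥ f) x - (M *ᵥ f) y ≤ C)
    (x : X) : 1 / 2 * ∑ y, |M x y - μ y| ≤ C := by
  classical
  set f : X → ℝ := fun y => if μ y < M x y then 1 else 0
  have hf : ∀ y, f y ∈ Set.Icc 0 1 := fun y => by by_cases h : μ y < M x y <;> simp [f, h]
  have habs : ∀ y, |M x y - μ y| = 2 * ((M x y - μ y) * f y) - (M x y - μ y) := fun y => by
    by_cases h : μ y < M x y
    · simp only [f, if_pos h, abs_of_pos (sub_pos.2 h)]; ring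
    · simp only [f, if_neg h, abs_of_nonpos (sub_nonpos.2 (not_lt.1 h))]; ring
  have hμf : ∑ y, μ y * (M *ᵥ f) y = ∑ y, μ y * f y := by
    simpa only [hμM, dotProduct] using Matrix.dotProduct_mulVec μ M f
  calc 1 / 2 * ∑ y, |M x y - μ y| = ∑ y, (M x y - μ y) * f y := by
        simp only [habs, sum_sub_distrib, ← mul_sum, hM, hμ1]; ring
    _ = ∑ y, μ y * ((M *ᵥ f) x - (M *ᵥ f) y) := by
        simp only [mul_sub, sub_mul, sum_sub_distrib, ← sum_mul, hμ1, hμf, one_mul]; rfl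
    _ ≤ ∑ y, μ y * C := sum_le_sum fun y _ => mul_le_mul_of_nonneg_left (hC f hf x y) (hμ0 y)
    _ = C := by rw [← sum_mul, hμ1, one_mul]

lemma one_sub_div_pow_floor_le {a x : ℝ} (ha : 0 ≤ a) (hax : a ≤ x) (R : ℝ) :
    (1 - a / x) ^ ⌊R⌋₊ ≤ exp (a / x * (1 - R)) := by
  have hx : 0 ≤ a / x := div_nonneg ha (ha.trans hax)
  calc (1 - a / x) ^ ⌊R⌋₊ ≤ exp (-(a / x)) ^ ⌊R⌋₊ :=
        pow_le_pow_left₀ (sub_nonneg.2 (div_le_one_of_le₀ hax (ha.trans hax)))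
          (by linarith [add_one_le_exp (-(a / x))]) _
    _ = exp (a / x * -⌊R⌋₊) := by rw [← exp_nat_mul]; ring_nf
    _ ≤ exp (a / x * (1 - R)) :=
        exp_le_exp.2 (mul_le_mul_of_nonneg_left (by linarith [Nat.lt_floor_add_one R]) hx)

lemma eventually_two_mul_pow_floor_mul_le {α α' ε : ℝ} (hα : 0 < α) (hαα' : α < α')
    (hε0 : 0 < ε) (hε1 : ε ≤ 1) :
    ∀ᶠ n : ℕ in atTop, 2 * (1 - α' / n) ^ ⌊n / α * (log n + log (1 / ε))⌋₊ * n ≤ ε := by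
  set θ := α' / α
  have hθ : 1 < θ := (one_lt_div hα).2 hαα'
  have hlog : Tendsto (fun n : ℕ => log n) atTop atTop :=
    tendsto_log_atTop.comp tendsto_natCast_atTop_atTop
  filter_upwards [(hlog.const_mul_atTop (sub_pos.2 hθ)).eventually_ge_atTop (log 2 + α'),
    tendsto_natCast_atTop_atTop.eventually_ge_atTop (max α' 1)] with n hn_log hn
  have hn1 : (1 : ℝ) ≤ n := le_of_max_le_right hn
  have hlogε : log ε ≤ 0 := log_nonpos hε0.le hε1
  set R := n / α * (log n + log (1 / ε))
  have hexponent : α' / n * (1 - R) = α' / n - θ * log n + θ * log ε := by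
    simp only [R, θ, one_div, log_inv]
    field_simp
    ring
  calc 2 * (1 - α' / n) ^ ⌊R⌋₊ * n ≤ 2 * exp (α' / n * (1 - R)) * n := by
        gcongr
        exact one_sub_div_pow_floor_le (hα.trans hαα').le (le_of_max_le_left hn) R
    _ = exp (log 2 + (α' / n - θ * log n + θ * log ε) + log n) := by
        rw [exp_add, exp_add, exp_log two_pos, exp_log (by linarith), hexponent]
    _ ≤ exp (log ε) := by
        refine exp_le_exp.2 ?_
        nlinarith [div_le_self (hα.trans hαα').le hn1,
          mul_nonneg (sub_nonneg.2 hθ.le) (neg_nonneg.2 hlogε)]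
    _ = ε := exp_log hε0

def zeroSpinWeight (β K : ℝ) (n : ℕ) : ℝ := exp (β - β * K / n)

def localField (β K : ℝ) (n : ℕ) (σ : Fin n → Fin 3) (i : Fin n) : ℝ :=
  2 * β * K * (Sn n σ - spinVal (σ i)) / n

def heatBathMean (β K : ℝ) (n : ℕ) (g : (Fin n → Fin 3) → ℝ) (σ : Fin n → Fin 3) (i : Fin n) :
    ℝ :=
  ∑ k, heatBathProb (zeroSpinWeight β K n) (localField β K n σ i) k * g (update σ i k)

def SiteLipschitz (n : ℕ) (L : ℝ) (g : (Fin n → Fin 3) → ℝ) : Prop :=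
  ∀ σ i k, |g (update σ i k) - g σ| ≤ L * |spinVal k - spinVal (σ i)|

def glauberRate (β K : ℝ) (n : ℕ) : ℝ :=
  (1 - 1 / n) * (1 + 4 * β * K / ((2 + zeroSpinWeight β K n) * n))

section BlumeCapel

variable {β K : ℝ} {n : ℕ}

lemma zeroSpinWeight_nonneg (β K : ℝ) (n : ℕ) : 0 ≤ zeroSpinWeight β K n := (exp_pos _).le

lemma zeroSpinWeight_le_four (hβ : β ≤ log 4) (hβK : 0 ≤ β * K) : zeroSpinWeight β K n ≤ 4 := by
  calc zeroSpinWeight β K n ≤ exp (log 4) :=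
        exp_le_exp.2 (by linarith [div_nonneg hβK n.cast_nonneg])
    _ = 4 := exp_log (by norm_num)

lemma sum_comp_update (f : Fin 3 → ℝ) (σ : Fin n → Fin 3) (i : Fin n) (k : Fin 3) :
    ∑ j, f (update σ i k j) = ∑ j, f (σ j) - f (σ i) + f k := by
  rw [← add_sum_erase _ _ (mem_univ i), ← add_sum_erase _ (fun j => f (σ j)) (mem_univ i),
    sum_congr rfl fun j hj => by rw [update_of_ne (ne_of_mem_erase hj)], update_self]
  ring

lemma Sn_update (σ : Fin n → Fin 3) (i : Fin n) (k : Fin 3) :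
    Sn n (update σ i k) = Sn n σ - spinVal (σ i) + spinVal k :=
  sum_comp_update spinVal σ i k

lemma localField_update_self (σ : Fin n → Fin 3) (i : Fin n) (k : Fin 3) :
    localField β K n (update σ i k) i = localField β K n σ i := by
  simp only [localField, Sn_update, update_self, add_sub_cancel_right]

lemma localField_update_of_ne {i j : Fin n} (hij : i ≠ j) (σ : Fin n → Fin 3) (k : Fin 3) :
    localField β K n (update σ j k) i
      = localField β K n σ i + 2 * β * K / n * (spinVal k - spinVal (σ j)) := by
  simp only [localField, Sn_update, update_of_ne hij]
  ring

lemma heatBathWeight_exp (a x : ℝ) (k : Fin 3) :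
    heatBathWeight (exp a) x k = exp (x * spinVal k + a * (1 - spinVal k ^ 2)) := by
  fin_cases k <;> simp [heatBathWeight, spinVal]

-- Both exponents are symmetric in the old and the new spin at `i`.
lemma exp_Hn_mul_heatBathWeight (σ : Fin n → Fin 3) (i : Fin n) (k : Fin 3) :
    exp (-β * Hn n K σ) * heatBathWeight (zeroSpinWeight β K n) (localField β K n σ i) k
      = exp (-β * Hn n K (update σ i k))
        * heatBathWeight (zeroSpinWeight β K n) (localField β K n σ i) (σ i) := by
  rw [zeroSpinWeight, heatBathWeight_exp, heatBathWeight_exp, ← exp_add, ← exp_add]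
  congr 1
  simp only [Hn, localField, sum_comp_update (spinVal · ^ 2), Sn_update]
  ring

lemma bcGlauber_apply (σ τ : Fin n → Fin 3) :
    bcGlauber β K n σ τ = (n : ℝ)⁻¹ * ∑ i, ∑ k, if τ = update σ i k then
      heatBathProb (zeroSpinWeight β K n) (localField β K n σ i) k else 0 := rfl

lemma sum_ite_eq_update (f : Fin 3 → ℝ) (σ τ : Fin n → Fin 3) (i : Fin n) :
    (∑ k, if τ = update σ i k then f k else 0)
      = if τ = update σ i (τ i) then f (τ i) else 0 := by
  rw [sum_eq_single (τ i)]
  · intro k _ hk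
    exact if_neg fun h => hk (by rw [h, update_self])
  · simp

lemma eq_update_self_comm {σ τ : Fin n → Fin 3} {i : Fin n} :
    τ = update σ i (τ i) ↔ σ = update τ i (σ i) := by
  simp only [eq_update_iff, true_and]
  exact forall₂_congr fun _ _ => eq_comm

lemma gibbsBC_mul_heatBathProb_eq (σ τ : Fin n → Fin 3) (i : Fin n) :
    gibbsBC n β K σ * (if τ = update σ i (τ i) then
        heatBathProb (zeroSpinWeight β K n) (localField β K n σ i) (τ i) else 0)
      = gibbsBC n β K τ * (if σ = update τ i (σ i) then
        heatBathProb (zeroSpinWeight β K n) (localField β K n τ i) (σ i) else 0) := by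
  by_cases hτ : τ = update σ i (τ i)
  · have hfield : localField β K n τ i = localField β K n σ i := by
      rw [hτ, localField_update_self]
    rw [if_pos hτ, if_pos (eq_update_self_comm.1 hτ), hfield, heatBathProb, heatBathProb,
      gibbsBC, gibbsBC, div_mul_div_comm, div_mul_div_comm, exp_Hn_mul_heatBathWeight, ← hτ]
  · rw [if_neg hτ, if_neg (mt eq_update_self_comm.2 hτ), mul_zero, mul_zero]

lemma bcGlauber_detailed_balance (σ τ : Fin n → Fin 3) :
    gibbsBC n β K σ * bcGlauber β K n σ τ = gibbsBC n β K τ * bcGlauber β K n τ σ := by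
  rw [bcGlauber_apply, bcGlauber_apply, mul_left_comm, mul_left_comm (gibbsBC n β K τ)]
  simp only [mul_sum, sum_ite_eq_update]
  exact Finset.sum_congr rfl fun i _ => by rw [gibbsBC_mul_heatBathProb_eq]

lemma bcGlauber_mulVec_apply (g : (Fin n → Fin 3) → ℝ) (σ : Fin n → Fin 3) :
    (bcGlauber β K n).mulVec g σ = (n : ℝ)⁻¹ * ∑ i, heatBathMean β K n g σ i := by
  simp only [Matrix.mulVec, dotProduct, bcGlauber_apply, heatBathMean, mul_assoc, sum_mul,
    ite_mul, zero_mul, ← mul_sum]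
  congr 1
  rw [sum_comm]
  refine Finset.sum_congr rfl fun i _ => ?_
  rw [sum_comm]
  exact Finset.sum_congr rfl fun k _ => by rw [sum_ite_eq']; simp

lemma bcGlauber_mem_rowStochastic (hn : 0 < n) :
    bcGlauber β K n ∈ Matrix.rowStochastic ℝ (Fin n → Fin 3) := by
  refine ⟨fun σ τ => ?_, funext fun σ => ?_⟩
  · rw [bcGlauber_apply]
    refine mul_nonneg (by positivity) (sum_nonneg fun i _ => sum_nonneg fun k _ => ?_)
    split_ifs
    exacts [heatBathProb_nonneg (zeroSpinWeight_nonneg β K n) _ k, le_rfl]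
  · simp only [bcGlauber_mulVec_apply, heatBathMean, Pi.one_apply, mul_one,
      sum_heatBathProb (zeroSpinWeight_nonneg β K n), sum_const, card_univ, Fintype.card_fin,
      nsmul_eq_mul]
    exact inv_mul_cancel₀ (by positivity)

lemma gibbsBC_vecMul_bcGlauber (hn : 0 < n) :
    gibbsBC n β K ᵥ* bcGlauber β K n = gibbsBC n β K := by
  funext τ
  simp only [Matrix.vecMul, dotProduct, bcGlauber_detailed_balance _ τ, ← mul_sum,
    Matrix.sum_row_of_mem_rowStochastic (bcGlauber_mem_rowStochastic hn), mul_one]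

lemma gibbsBC_nonneg (σ : Fin n → Fin 3) : 0 ≤ gibbsBC n β K σ :=
  div_nonneg (exp_pos _).le (sum_nonneg fun _ _ => (exp_pos _).le)

lemma sum_gibbsBC : ∑ σ, gibbsBC n β K σ = 1 := by
  simp only [gibbsBC, ← sum_div]
  exact div_self (sum_pos (fun _ _ => exp_pos _) univ_nonempty).ne'

lemma gibbsBC_vecMul_bcGlauber_pow (hn : 0 < n) (t : ℕ) :
    gibbsBC n β K ᵥ* (bcGlauber β K n ^ t) = gibbsBC n β K := by
  induction t with
  | zero => simp
  | succ t ih => rw [pow_succ, ← Matrix.vecMul_vecMul, ih, gibbsBC_vecMul_bcGlauber hn]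

lemma heatBathMean_update_self (g : (Fin n → Fin 3) → ℝ) (σ : Fin n → Fin 3) (i : Fin n)
    (k : Fin 3) : heatBathMean β K n g (update σ i k) i = heatBathMean β K n g σ i := by
  simp only [heatBathMean, localField_update_self, update_idem]

lemma abs_sum_heatBathProb_update_sub_mul_le (hβK : 0 ≤ β * K)
    (hc : zeroSpinWeight β K n ≤ 4) {L : ℝ} (hL : 0 ≤ L) {g : (Fin n → Fin 3) → ℝ}
    (hg : SiteLipschitz n L g) (σ : Fin n → Fin 3) {i j : Fin n} (hij : i ≠ j) (k : Fin 3) :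
    |∑ l, (heatBathProb (zeroSpinWeight β K n) (localField β K n (update σ j k) i) l
        - heatBathProb (zeroSpinWeight β K n) (localField β K n σ i) l) * g (update σ i l)|
      ≤ L * |spinVal k - spinVal (σ j)| * (4 * β * K / ((2 + zeroSpinWeight β K n) * n)) := by
  set c := zeroSpinWeight β K n
  set u := |spinVal k - spinVal (σ j)|
  have hc0 : 0 ≤ c := zeroSpinWeight_nonneg β K n
  have hsite : ∀ l, |g (update σ i l) - g (update σ i 1)| ≤ L * |spinVal l| := fun l => by
    simpa [spinVal] using hg (update σ i 1) i l
  have hfield : |localField β K n (update σ j k) i - localField β K n σ i|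
      = 2 * β * K / n * u := by
    rw [localField_update_of_ne hij, add_sub_cancel_left, abs_mul,
      abs_of_nonneg (div_nonneg (by linarith) n.cast_nonneg)]
  calc _ ≤ (|heatBathProb c (localField β K n (update σ j k) i) 0
          - heatBathProb c (localField β K n σ i) 0|
        + |heatBathProb c (localField β K n (update σ j k) i) 2
          - heatBathProb c (localField β K n σ i) 2|) * L :=
        abs_sum_sub_mul_le (sum_heatBathProb hc0 _) (sum_heatBathProb hc0 _)
          (by simpa [spinVal] using hsite 0) (by simpa [spinVal] using hsite 2)
    _ ≤ (2 / (2 + c) * (2 * β * K / n * u)) * L := by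
        gcongr
        rw [← hfield]
        exact abs_heatBathProb_sub_le hc0 hc _ _
    _ = L * u * (4 * β * K / ((2 + c) * n)) := by
        field_simp
        ring

lemma abs_heatBathMean_update_sub_le (hβK : 0 ≤ β * K) (hc : zeroSpinWeight β K n ≤ 4)
    {L : ℝ} (hL : 0 ≤ L) {g : (Fin n → Fin 3) → ℝ} (hg : SiteLipschitz n L g)
    (σ : Fin n → Fin 3) {i j : Fin n} (hij : i ≠ j) (k : Fin 3) :
    |heatBathMean β K n g (update σ j k) i - heatBathMean β K n g σ i|
      ≤ L * |spinVal k - spinVal (σ j)| * (1 + 4 * β * K / ((2 + zeroSpinWeight β K n) * n)) := by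
  set c := zeroSpinWeight β K n
  set p := heatBathProb c (localField β K n σ i)
  set q := heatBathProb c (localField β K n (update σ j k) i)
  have hc0 : 0 ≤ c := zeroSpinWeight_nonneg β K n
  -- couple the two heat-bath updates at `i` through the same new spin
  have hsplit : heatBathMean β K n g (update σ j k) i - heatBathMean β K n g σ i
      = ∑ l, q l * (g (update (update σ j k) i l) - g (update σ i l))
        + ∑ l, (q l - p l) * g (update σ i l) := by
    simp only [heatBathMean, ← sum_sub_distrib, ← sum_add_distrib]
    exact Finset.sum_congr rfl fun l _ => by ring
  have hcoupled : |∑ l, q l * (g (update (update σ j k) i l) - g (update σ i l))|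
      ≤ L * |spinVal k - spinVal (σ j)| := by
    refine abs_sum_mul_le_of_sum_eq_one (heatBathProb_nonneg hc0 _) (sum_heatBathProb hc0 _)
      fun l => ?_
    rw [update_comm (Ne.symm hij)]
    simpa only [update_of_ne hij.symm] using hg (update σ i l) j k
  rw [hsplit, mul_one_add]
  exact (abs_add_le _ _).trans
    (add_le_add hcoupled (abs_sum_heatBathProb_update_sub_mul_le hβK hc hL hg σ hij k))

lemma glauberRate_nonneg (hβK : 0 ≤ β * K) (hn : 0 < n) : 0 ≤ glauberRate β K n := by
  have hn' : (1 : ℝ) / n ≤ 1 := div_le_one_of_le₀ (by exact_mod_cast hn) n.cast_nonneg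
  have : 0 ≤ 4 * β * K / ((2 + zeroSpinWeight β K n) * n) :=
    div_nonneg (by linarith) (mul_nonneg (by linarith [zeroSpinWeight_nonneg β K n]) n.cast_nonneg)
  unfold glauberRate
  nlinarith

lemma SiteLipschitz.bcGlauber_mulVec (hβK : 0 ≤ β * K) (hc : zeroSpinWeight β K n ≤ 4)
    {L : ℝ} (hL : 0 ≤ L) {g : (Fin n → Fin 3) → ℝ} (hg : SiteLipschitz n L g) :
    SiteLipschitz n (glauberRate β K n * L) ((bcGlauber β K n).mulVec g) := by
  intro σ j k
  let B := L * |spinVal k - spinVal (σ j)| * (1 + 4 * β * K / ((2 + zeroSpinWeight β K n) * n))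
  set T := fun i => heatBathMean β K n g (update σ j k) i - heatBathMean β K n g σ i
  have hn : (0 : ℝ) < n := by exact_mod_cast j.pos
  have hT : ∀ i ∈ univ.erase j, |T i| ≤ B := fun i hi =>
    abs_heatBathMean_update_sub_le hβK hc hL hg σ (ne_of_mem_erase hi) k
  calc |(bcGlauber β K n).mulVec g (update σ j k) - (bcGlauber β K n).mulVec g σ|
      = (n : ℝ)⁻¹ * |∑ i ∈ univ.erase j, T i| := by
        rw [bcGlauber_mulVec_apply, bcGlauber_mulVec_apply, ← mul_sub, ← sum_sub_distrib,
          ← add_sum_erase _ _ (mem_univ j)]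
        simp only [T, heatBathMean_update_self, sub_self, zero_add, abs_mul, abs_inv,
          Nat.abs_cast]
    _ ≤ (n : ℝ)⁻¹ * ((univ.erase j).card • B) := by
        gcongr
        exact (abs_sum_le_sum_abs _ _).trans (sum_le_card_nsmul _ _ _ hT)
    _ = glauberRate β K n * L * |spinVal k - spinVal (σ j)| := by
        rw [card_erase_of_mem (mem_univ j), card_univ, Fintype.card_fin, nsmul_eq_mul,
          Nat.cast_pred j.pos, glauberRate]
        simp only [B]
        field_simp

lemma SiteLipschitz.bcGlauber_pow_mulVec (hβK : 0 ≤ β * K) (hc : zeroSpinWeight β K n ≤ 4)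
    (hn : 0 < n) {L : ℝ} (hL : 0 ≤ L) {g : (Fin n → Fin 3) → ℝ} (hg : SiteLipschitz n L g)
    (t : ℕ) : SiteLipschitz n (glauberRate β K n ^ t * L) ((bcGlauber β K n ^ t).mulVec g) := by
  induction t with
  | zero => simpa using hg
  | succ t ih =>
    rw [pow_succ' (bcGlauber β K n), ← Matrix.mulVec_mulVec, pow_succ', mul_assoc]
    exact ih.bcGlauber_mulVec hβK hc
      (mul_nonneg (pow_nonneg (glauberRate_nonneg hβK hn) t) hL)

lemma SiteLipschitz.abs_sub_le_sum {L : ℝ} {g : (Fin n → Fin 3) → ℝ} (hg : SiteLipschitz n L g)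
    (σ τ : Fin n → Fin 3) : |g τ - g σ| ≤ L * ∑ i, |spinVal (τ i) - spinVal (σ i)| := by
  classical
  suffices h : ∀ s : Finset (Fin n),
      |g (s.piecewise τ σ) - g σ| ≤ L * ∑ i ∈ s, |spinVal (τ i) - spinVal (σ i)| by
    simpa using h univ
  intro s
  induction s using Finset.induction_on with
  | empty => simp
  | insert i s hi ih =>
    rw [piecewise_insert, sum_insert hi, mul_add]
    calc _ ≤ |g (update (s.piecewise τ σ) i (τ i)) - g (s.piecewise τ σ)|
          + |g (s.piecewise τ σ) - g σ| := abs_sub_le _ _ _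
      _ ≤ _ := by
        gcongr
        simpa [piecewise_eq_of_notMem _ _ _ hi] using hg (s.piecewise τ σ) i (τ i)

lemma SiteLipschitz.abs_sub_le_two_mul {L : ℝ} (hL : 0 ≤ L) {g : (Fin n → Fin 3) → ℝ}
    (hg : SiteLipschitz n L g) (σ τ : Fin n → Fin 3) : |g τ - g σ| ≤ 2 * L * n := by
  have hspin : ∀ a b : Fin 3, |spinVal a - spinVal b| ≤ 2 := by
    intro a b; fin_cases a <;> fin_cases b <;> norm_num [spinVal]
  calc |g τ - g σ| ≤ L * ∑ i, |spinVal (τ i) - spinVal (σ i)| := hg.abs_sub_le_sum σ τ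
    _ ≤ L * ∑ _i : Fin n, 2 := by gcongr with i; exact hspin _ _
    _ = 2 * L * n := by simp; ring

lemma siteLipschitz_one_of_mem_Icc {f : (Fin n → Fin 3) → ℝ} (hf : ∀ σ, f σ ∈ Set.Icc 0 1) :
    SiteLipschitz n 1 f := by
  intro σ i k
  rcases eq_or_ne k (σ i) with rfl | hk
  · simp
  · have hgap : ∀ a b : Fin 3, a ≠ b → 1 ≤ |spinVal a - spinVal b| := by
      intro a b; fin_cases a <;> fin_cases b <;> norm_num [spinVal]
    rw [one_mul]
    refine le_trans ?_ (hgap _ _ hk)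
    obtain ⟨h0, h1⟩ := hf (update σ i k)
    obtain ⟨h0', h1'⟩ := hf σ
    rw [abs_sub_le_iff]; constructor <;> linarith

lemma tvBC_bcGlauber_pow_le (hβK : 0 ≤ β * K) (hc : zeroSpinWeight β K n ≤ 4) (hn : 0 < n)
    (t : ℕ) (σ : Fin n → Fin 3) :
    tvBC n (fun τ => (bcGlauber β K n ^ t) σ τ) (gibbsBC n β K)
      ≤ 2 * glauberRate β K n ^ t * n := by
  refine half_sum_abs_sub_le_of_oscillation
    (Matrix.sum_row_of_mem_rowStochastic (pow_mem (bcGlauber_mem_rowStochastic hn) t))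
    gibbsBC_nonneg sum_gibbsBC (gibbsBC_vecMul_bcGlauber_pow hn t) (fun f hf x y => ?_) σ
  have hLip := (siteLipschitz_one_of_mem_Icc hf).bcGlauber_pow_mulVec hβK hc hn zero_le_one t
  rw [mul_one] at hLip
  exact (le_abs_self _).trans
    (hLip.abs_sub_le_two_mul (pow_nonneg (glauberRate_nonneg hβK hn) t) y x)

lemma glauberRate_le (hβK : 0 ≤ β * K) (hn : 0 < n) :
    glauberRate β K n ≤ 1 - (1 - 4 * β * K / (2 + zeroSpinWeight β K n)) / n := by
  set r := 4 * β * K / (2 + zeroSpinWeight β K n)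
  have hr : 0 ≤ r := div_nonneg (by linarith) (by linarith [zeroSpinWeight_nonneg β K n])
  have hn' : (0 : ℝ) < n := by exact_mod_cast hn
  have hexpand : (1 - 1 / n) * (1 + r / n) = 1 - (1 - r) / n - r / n ^ 2 := by
    field_simp; ring
  rw [glauberRate, ← div_div, hexpand]
  linarith [div_nonneg hr (sq_nonneg (n : ℝ))]

lemma tendsto_zeroSpinWeight (β K : ℝ) :
    Tendsto (fun n : ℕ => zeroSpinWeight β K n) atTop (𝓝 (exp β)) := by
  have h := tendsto_const_nhds (x := β).sub (tendsto_const_div_atTop_nhds_zero_nat (β * K))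
  rw [sub_zero] at h
  exact (continuous_exp.tendsto β).comp h

lemma eventually_glauberRate_le (hβ : 0 < β) (hK : 0 ≤ K) {α' : ℝ}
    (hα' : α' < (Kc2 β - K) / Kc2 β) : ∀ᶠ n : ℕ in atTop, glauberRate β K n ≤ 1 - α' / n := by
  have hβK : 0 ≤ β * K := mul_nonneg hβ.le hK
  have hlim : 4 * β * K / (2 + exp β) = 1 - (Kc2 β - K) / Kc2 β := by
    unfold Kc2; field_simp; ring
  have hr : Tendsto (fun n : ℕ => 4 * β * K / (2 + zeroSpinWeight β K n)) atTop
      (𝓝 (4 * β * K / (2 + exp β))) :=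
    tendsto_const_nhds.div (tendsto_const_nhds.add (tendsto_zeroSpinWeight β K)) (by positivity)
  filter_upwards [hr.eventually (gt_mem_nhds (show _ < 1 - α' by linarith)),
    eventually_gt_atTop 0] with n hrn hn
  refine (glauberRate_le hβK hn).trans (sub_le_sub_left ?_ 1)
  exact div_le_div_of_nonneg_right (by linarith) n.cast_nonneg

end BlumeCapel

theorem blume_capel_rapid_mixing_continuous_general (β K : ℝ) (hβ0 : 0 < β)
    (hβ : β ≤ Real.log 4) (hK0 : 0 < K) :
    ∀ α ∈ Set.Ioo (0 : ℝ) ((Kc2 β - K) / Kc2 β), ∀ ε ∈ Set.Ioo (0 : ℝ) 1,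
      ∀ᶠ n : ℕ in atTop,
        (tmixBC β K n ε : ℝ) ≤ (n / α) * (Real.log n + Real.log (1 / ε)) := by
  rintro α ⟨hα0, hα⟩ ε ⟨hε0, hε1⟩
  obtain ⟨α', hαα', hα'⟩ := exists_between hα
  have hβK : 0 ≤ β * K := mul_nonneg hβ0.le hK0.le
  filter_upwards [eventually_glauberRate_le hβ0 hK0.le hα',
    eventually_two_mul_pow_floor_mul_le hα0 hαα' hε0 hε1.le, eventually_gt_atTop 0]
    with n hrate hsmall hn
  set t := ⌊n / α * (log n + log (1 / ε))⌋₊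
  have hmix : ∀ σ, tvBC n (fun τ => (bcGlauber β K n ^ t) σ τ) (gibbsBC n β K) ≤ ε := fun σ =>
    calc _ ≤ 2 * glauberRate β K n ^ t * n :=
          tvBC_bcGlauber_pow_le hβK (zeroSpinWeight_le_four hβ hβK) hn t σ
      _ ≤ 2 * (1 - α' / n) ^ t * n := by gcongr; exact glauberRate_nonneg hβK hn
      _ ≤ ε := hsmall
  have htmix : tmixBC β K n ε ≤ t := Nat.sInf_le hmix
  refine (Nat.cast_le.2 htmix).trans (Nat.floor_le ?_)
  exact mul_nonneg (by positivity) (add_nonneg (by positivity)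
    (log_nonneg (one_le_one_div hε0 hε1.le)))

/-- **Rapid mixing in the continuous phase transition region.**  For
`0 < β ≤ β_c = log 4` and `K < K_c^{(2)}(β)`, for every
`α ∈ (0, (K_c^{(2)}(β) − K)/K_c^{(2)}(β))` and `ε ∈ (0,1)`, for all sufficiently
large `n`, `t_mix(ε) ≤ (n/α)(log n + log(1/ε))`. -/
theorem blume_capel_rapid_mixing_continuous (β K : ℝ) (hβ0 : 0 < β)
    (hβ : β ≤ Real.log 4) (hK0 : 0 < K) (hK : K < Kc2 β) :
    ∀ α ∈ Set.Ioo (0 : ℝ) ((Kc2 β - K) / Kc2 β), ∀ ε ∈ Set.Ioo (0 : ℝ) 1,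
      ∀ᶠ n : ℕ in atTop,
        (tmixBC β K n ε : ℝ) ≤ (n / α) * (Real.log n + Real.log (1 / ε)) :=
  blume_capel_rapid_mixing_continuous_general β K hβ0 hβ hK0

end
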